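/- The multiclass target-set distance is monotone: for the closed-form distance d(S_W, S_U) given piecewise by (i) 0 if S_W ≥ p and S_U ≤ q; (ii) p·f(S_W/p) + (1−p)·f((1−S_W)/(1−p)) if S_W < p and S_U ≤ (1−S_W)q/(1−p); (iii) q·f(S_U/q) + (1−q)·f((1−S_U)/(1−q)) if S_U > q and S_W ≥ (1−S_U)p/(1−q); (iv) p·f(S_W/p) + q·f(S_U/q) + (1−p−q)·f((1−S_W−S_U)/(1−p−q)) otherwise — the partial derivative with respect to S_W is nonpositive on the interior of each region. -/
import Mathlib


/-- The partial derivative of the multiclass target-set distance with respect to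
`S_W` is nonpositive on the interior of each region: it is `0` in regions (i) and
(iii), `f'(S_W/p) - f'((1-S_W)/(1-p))` in region (ii), and
`f'(S_W/p) - f'((1-S_W-S_U)/(1-p-q))` in region (iv). -/
theorem stmt_14 (f : ℝ → ℝ) (p q SW SU : ℝ)
    (hconv : ConvexOn ℝ (Set.Ioi (0:ℝ)) f)
    (hdiff : ∀ x ∈ Set.Ioi (0:ℝ), DifferentiableAt ℝ f x)
    (hdiff2 : ∀ x ∈ Set.Ioi (0:ℝ), DifferentiableAt ℝ (deriv f) x)
    (hf1 : f 1 = 0)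
    (hp : 0 < p) (hq : 0 < q) (hpq : p + q < 1)
    (hSW : 0 < SW) (hSU : 0 < SU) (hS : SW + SU < 1) :
    ((0:ℝ) ≤ 0) ∧
    (SW < p → SU ≤ (1 - SW) * q / (1 - p) →
      deriv f (SW / p) - deriv f ((1 - SW) / (1 - p)) ≤ 0) ∧
    ((0:ℝ) ≤ 0) ∧
    (SU > (1 - SW) * q / (1 - p) → SW < (1 - SU) * p / (1 - q) →
      deriv f (SW / p) - deriv f ((1 - SW - SU) / (1 - p - q)) ≤ 0) := by
  have hmono := hconv.monotoneOn_deriv hdiff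
  have hp1 : p < 1 := by linarith
  have hq1 : q < 1 := by linarith
  have hwp : SW / p ∈ Set.Ioi (0:ℝ) := by
    exact Set.mem_Ioi.mpr (div_pos hSW hp)
  refine ⟨le_refl 0, ?_, le_refl 0, ?_⟩
  · intro h1 _
    have hy : (1 - SW) / (1 - p) ∈ Set.Ioi (0:ℝ) :=
      Set.mem_Ioi.mpr (div_pos (by linarith) (by linarith))
    have hle : SW / p ≤ (1 - SW) / (1 - p) := by
      rw [div_le_div_iff₀ hp (by linarith)]
      nlinarith
    linarith [hmono hwp hy hle]
  · intro _ h2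
    have hy : (1 - SW - SU) / (1 - p - q) ∈ Set.Ioi (0:ℝ) :=
      Set.mem_Ioi.mpr (div_pos (by linarith) (by linarith))
    have hle : SW / p ≤ (1 - SW - SU) / (1 - p - q) := by
      rw [div_le_div_iff₀ hp (by linarith)]
      have : SW * (1 - q) ≤ (1 - SU) * p := by
        have := (lt_div_iff₀ (by linarith : (0:ℝ) < 1 - q)).mp h2
        linarith
      nlinarith
    linarith [hmono hwp hy hle]
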